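/- For the continuous-time heat kernel p on Z generated by γΔ (where Δ is the discrete Laplacian and p(0,·)=δ₀), there exists a constant C such that for all z ∈ Z and t > 0, |p(t,z) - p(t,z+1)| ≤ C/(γt). -/

import Mathlib

/-!
In Fourier form, `p(t,z) - p(t,z+1) = (2π)⁻¹ ∫_{-π}^{π} e^{-2(1 - cos ξ)γt} (cos ξz - cos ξ(z+1)) dξ`.
Since `cos` is 1-Lipschitz the cosine difference is at most `|ξ|`, and on `[-π, π]` we have
`1 - cos ξ ≥ 2ξ²/π²`, so the integrand is dominated by `|ξ| e^{-bξ²}` with `b = 4γt/π²`.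
The latter integrates over all of `ℝ` to `1/b`, which gives `C = π/8`.
-/

open MeasureTheory Real Set

lemma integral_Ioi_mul_exp_neg_mul_sq {b : ℝ} (hb : 0 < b) :
    ∫ x in Ioi (0 : ℝ), x * exp (-b * x ^ 2) = (2 * b)⁻¹ := by
  have h := integral_mul_cexp_neg_mul_sq (b := (b : ℂ)) (by simpa using hb)
  have hcast : ∀ x : ℝ, (x : ℂ) * Complex.exp (-(b : ℂ) * (x : ℂ) ^ 2)
      = ((x * exp (-b * x ^ 2) : ℝ) : ℂ) := fun x => by push_cast; ring_nf
  simp_rw [hcast, integral_complex_ofReal] at h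
  exact_mod_cast h

lemma integral_abs_mul_exp_neg_mul_sq {b : ℝ} (hb : 0 < b) :
    ∫ x, |x| * exp (-b * x ^ 2) = b⁻¹ := by
  have h := integral_comp_abs (f := fun x => x * exp (-b * x ^ 2))
  simp only [sq_abs] at h
  rw [h, integral_Ioi_mul_exp_neg_mul_sq hb]
  field_simp

lemma setIntegral_abs_mul_exp_neg_mul_sq_le {b : ℝ} (hb : 0 < b) (s : Set ℝ) :
    ∫ x in s, |x| * exp (-b * x ^ 2) ≤ b⁻¹ := by
  have hint : Integrable fun x : ℝ => |x| * exp (-b * x ^ 2) := by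
    simpa [abs_mul] using (integrable_mul_exp_neg_mul_sq hb).abs
  rw [← integral_abs_mul_exp_neg_mul_sq hb]
  exact setIntegral_le_integral hint (.of_forall fun x => by positivity)

lemma exp_neg_two_mul_one_sub_cos_mul_le {ξ s : ℝ} (hξ : |ξ| ≤ π) (hs : 0 ≤ s) :
    exp (-(2 * (1 - cos ξ)) * s) ≤ exp (-(4 * s / π ^ 2) * ξ ^ 2) := by
  have hcos := cos_le_one_sub_mul_cos_sq hξ
  rw [exp_le_exp]
  have : -(4 * s / π ^ 2) * ξ ^ 2 = -(2 * (2 / π ^ 2 * ξ ^ 2)) * s := by ring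
  rw [this]
  nlinarith

noncomputable def heatIntegrand (γ t x ξ : ℝ) : ℝ :=
  exp (-(2 * (1 - cos ξ)) * γ * t) * cos (ξ * x)

lemma continuous_heatIntegrand (γ t x : ℝ) : Continuous (heatIntegrand γ t x) := by
  unfold heatIntegrand; fun_prop

lemma abs_heatIntegrand_sub_le {γ t ξ : ℝ} (hγt : 0 ≤ γ * t) (hξ : |ξ| ≤ π) (x : ℝ) :
    |heatIntegrand γ t x ξ - heatIntegrand γ t (x + 1) ξ|
      ≤ |ξ| * exp (-(4 * (γ * t) / π ^ 2) * ξ ^ 2) := by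
  have hcos : |cos (ξ * x) - cos (ξ * (x + 1))| ≤ |ξ| := by
    simpa [← mul_sub] using abs_cos_sub_cos_le (ξ * x) (ξ * (x + 1))
  have hexp := exp_neg_two_mul_one_sub_cos_mul_le hξ hγt
  rw [← mul_assoc] at hexp
  calc |heatIntegrand γ t x ξ - heatIntegrand γ t (x + 1) ξ|
      = exp (-(2 * (1 - cos ξ)) * γ * t) * |cos (ξ * x) - cos (ξ * (x + 1))| := by
        rw [heatIntegrand, heatIntegrand, ← mul_sub, abs_mul, abs_of_pos (exp_pos _)]
    _ ≤ exp (-(4 * (γ * t) / π ^ 2) * ξ ^ 2) * |ξ| :=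
        mul_le_mul hexp hcos (abs_nonneg _) (exp_pos _).le
    _ = |ξ| * exp (-(4 * (γ * t) / π ^ 2) * ξ ^ 2) := mul_comm _ _

lemma abs_integral_heatIntegrand_sub_le {γ t : ℝ} (hγt : 0 < γ * t) (x : ℝ) :
    |(∫ ξ in Icc (-π) π, heatIntegrand γ t x ξ) - ∫ ξ in Icc (-π) π, heatIntegrand γ t (x + 1) ξ|
      ≤ π ^ 2 / (4 * (γ * t)) := by
  have hb : 0 < 4 * (γ * t) / π ^ 2 := by positivity
  rw [← integral_sub (continuous_heatIntegrand γ t x).integrableOn_Icc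
    (continuous_heatIntegrand γ t (x + 1)).integrableOn_Icc]
  calc _ ≤ ∫ ξ in Icc (-π) π, |heatIntegrand γ t x ξ - heatIntegrand γ t (x + 1) ξ| :=
        abs_integral_le_integral_abs
    _ ≤ ∫ ξ in Icc (-π) π, |ξ| * exp (-(4 * (γ * t) / π ^ 2) * ξ ^ 2) := by
        refine setIntegral_mono_on ?_ (by fun_prop : Continuous _).integrableOn_Icc
          measurableSet_Icc fun ξ hξ => abs_heatIntegrand_sub_le hγt.le (abs_le.2 hξ) x
        exact (((continuous_heatIntegrand γ t x).sub
          (continuous_heatIntegrand γ t (x + 1))).abs).integrableOn_Icc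
    _ ≤ (4 * (γ * t) / π ^ 2)⁻¹ := setIntegral_abs_mul_exp_neg_mul_sq_le hb _
    _ = π ^ 2 / (4 * (γ * t)) := inv_div _ _

theorem heat_kernel_gradient_bound (γ : ℝ) (hγ : 0 < γ) (p : ℝ → ℤ → ℝ)
    (hp : ∀ (t : ℝ) (z : ℤ), p t z =
      (1 / (2 * Real.pi)) * ∫ ξ in Set.Icc (-Real.pi) Real.pi,
        Real.exp (-(2 * (1 - Real.cos ξ)) * γ * t) * Real.cos (ξ * (z : ℝ))) :
    ∃ C : ℝ, ∀ (z : ℤ) (t : ℝ), 0 < t → |p t z - p t (z + 1)| ≤ C / (γ * t) := by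
  refine ⟨π / 8, fun z t ht => ?_⟩
  have hγt : 0 < γ * t := mul_pos hγ ht
  have hdiff := abs_integral_heatIntegrand_sub_le hγt z
  simp only [heatIntegrand] at hdiff
  rw [hp, hp, ← mul_sub, abs_mul, abs_of_pos (by positivity), Int.cast_add, Int.cast_one]
  calc _ ≤ 1 / (2 * π) * (π ^ 2 / (4 * (γ * t))) := by gcongr
    _ = π / 8 / (γ * t) := by field_simp; ring
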